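/- arXiv:2106.08441 — 2 statements merged into one kernel-verified Lean document; each statement's English description precedes it below -/
import Mathlib

section
/- Let G = (V, E) be a directed graph on K vertices in which every vertex has a self-loop, let D be a dominating set for G (for every vertex i there exists j in D with an edge j -> i), and let p_1, ..., p_K be a probability distribution over V such that p_i >= beta > 0 for every i in D. Then sum_{i=1}^K p_i / ( sum over j with edge j -> i of p_j ) <= 2*alpha(G) * ln( 1 + ( ceil( K^2/(beta*|D|) ) + K ) / alpha(G) ) + 2*|D|, where alpha(G) is the independence number of G. -/
open Real Finset

/-!
Peel off vertices one at a time, always one of largest in-weight inside the remaining set `U`.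
A weighted Caro–Wei bound for the symmetrised graph, Cauchy–Schwarz and a double-counting of
edges show that this in-weight is at least `p(U) / (2α)`, so the peeled vertex contributes at most
`2α p_u / p(U) ≤ 2α (log p(U) - log (p(U) - p_u))`. These telescope while `p(U) > β|D|`, giving
`2α log (1 / (β|D|))`, plus at most `1` for the vertex whose removal brings `p(U)` below `β|D|`.
Every in-weight is at least `β` because `D` dominates, so the vertices left then contribute at
most `β|D| / β = |D|`.
-/

lemma sum_div_le_sum_div_of_forall_le {ι : Type*} {s : Finset ι} {f g : ι → ℝ} {b : ℝ}
    (hb : 0 < b) (hf : ∀ i ∈ s, 0 ≤ f i) (hg : ∀ i ∈ s, b ≤ g i) :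
    ∑ i ∈ s, f i / g i ≤ (∑ i ∈ s, f i) / b := by
  rw [sum_div]
  exact sum_le_sum fun i hi => div_le_div_of_nonneg_left (hf i hi) hb (hg i hi)

section InWeight

variable {V : Type*} (R : V → V → Prop) [DecidableRel R] (p : V → ℝ)

def inWeight (U : Finset V) (u : V) : ℝ := ∑ j ∈ U with R j u, p j

variable {R p}

lemma le_inWeight {U : Finset V} {u j : V} (hp : ∀ v ∈ U, 0 ≤ p v) (hj : j ∈ U) (hju : R j u) :
    p j ≤ inWeight R p U u :=
  single_le_sum (fun v hv => hp v (mem_filter.1 hv).1) (mem_filter.2 ⟨hj, hju⟩)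

lemma inWeight_mono {U U' : Finset V} (hp : ∀ v ∈ U, 0 ≤ p v) (h : U' ⊆ U) (u : V) :
    inWeight R p U' u ≤ inWeight R p U u :=
  sum_le_sum_of_subset_of_nonneg (filter_subset_filter _ h) fun v hv _ => hp v (mem_filter.1 hv).1

lemma inWeight_pos (hR : ∀ u, R u u) {U : Finset V} {u : V} (hp : ∀ v ∈ U, 0 < p v)
    (hu : u ∈ U) : 0 < inWeight R p U u :=
  (hp u hu).trans_le (le_inWeight (fun v hv => (hp v hv).le) hu (hR u))

lemma inWeight_or_le {U : Finset V} (hp : ∀ v ∈ U, 0 ≤ p v) (u : V) :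
    inWeight (fun i j => R i j ∨ R j i) p U u ≤
      inWeight R p U u + inWeight (fun i j => R j i) p U u := by
  simp only [inWeight, sum_filter]
  rw [← sum_add_distrib]
  refine sum_le_sum fun j hj => ?_
  split_ifs <;> simp_all

lemma sum_mul_inWeight_flip (U : Finset V) :
    ∑ u ∈ U, p u * inWeight (fun i j => R j i) p U u = ∑ u ∈ U, p u * inWeight R p U u := by
  simp only [inWeight, mul_sum, sum_filter]
  rw [sum_comm]
  refine sum_congr rfl fun u _ => sum_congr rfl fun j _ => ?_
  split_ifs <;> ring

theorem exists_pairwise_sum_div_inWeight_le [DecidableEq V] (hR : ∀ u, R u u)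
    (hRs : ∀ i j, R i j → R j i) (U : Finset V) (hp : ∀ u ∈ U, 0 < p u) :
    ∃ S ⊆ U, (S : Set V).Pairwise (fun i j => ¬R i j) ∧
      ∑ u ∈ U, p u / inWeight R p U u ≤ #S := by
  induction U using Finset.strongInduction with
  | H U ih =>
  rcases U.eq_empty_or_nonempty with rfl | hU
  · exact ⟨∅, empty_subset _, by simp, by simp⟩
  obtain ⟨v, hv, hmin⟩ := U.exists_min_image (inWeight R p U) hU
  have hsub : U.filter (fun u => ¬R u v) ⊂ U := filter_ssubset.2 ⟨v, hv, not_not.2 (hR v)⟩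
  obtain ⟨S, hSU, hS, hsum⟩ := ih _ hsub fun u hu => hp u (hsub.subset hu)
  have hSv : ∀ s ∈ S, ¬R s v := fun s hs => (mem_filter.1 (hSU hs)).2
  refine ⟨insert v S, insert_subset hv (hSU.trans hsub.subset), ?_, ?_⟩
  · rw [coe_insert, Set.pairwise_insert]
    exact ⟨hS, fun s hs _ => ⟨fun h => hSv s hs (hRs v s h), hSv s hs⟩⟩
  -- `v` has minimal weight, so its neighbours contribute at most `p(N[v]) / p(N[v]) = 1`
  have hnbhd : ∑ u ∈ U with R u v, p u / inWeight R p U u ≤ 1 := by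
    have hw := inWeight_pos hR hp hv
    calc ∑ u ∈ U with R u v, p u / inWeight R p U u
        ≤ ∑ u ∈ U with R u v, p u / inWeight R p U v :=
          sum_le_sum fun u hu => div_le_div_of_nonneg_left (hp u (mem_filter.1 hu).1).le hw
            (hmin u (mem_filter.1 hu).1)
      _ = 1 := by rw [← sum_div]; exact div_self hw.ne'
  have hrest : ∑ u ∈ U with ¬R u v, p u / inWeight R p U u ≤ #S :=
    (sum_le_sum fun u hu => div_le_div_of_nonneg_left (hp u (hsub.subset hu)).le
      (inWeight_pos hR (fun w hw => hp w (hsub.subset hw)) hu)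
      (inWeight_mono (fun w hw => (hp w hw).le) hsub.subset u)).trans hsum
  rw [card_insert_of_notMem fun h => hSv v h (hR v),
    ← sum_filter_add_sum_filter_not U (fun u => R u v)]
  push_cast
  linarith

theorem exists_sum_le_two_mul_inWeight [DecidableEq V] (hR : ∀ u, R u u) {α : ℕ}
    (hα : ∀ S : Finset V, (S : Set V).Pairwise (fun i j => ¬R i j) → #S ≤ α)
    {U : Finset V} (hU : U.Nonempty) (hp : ∀ u ∈ U, 0 < p u) :
    ∃ u ∈ U, ∑ j ∈ U, p j ≤ 2 * α * inWeight R p U u := by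
  set w := inWeight (fun i j => R i j ∨ R j i) p U
  set q := ∑ j ∈ U, p j
  have hp0 : ∀ u ∈ U, 0 ≤ p u := fun u hu => (hp u hu).le
  have hR' : ∀ u, R u u ∨ R u u := fun u => Or.inl (hR u)
  have hw : ∀ u ∈ U, 0 < w u := fun u hu => inWeight_pos hR' hp hu
  have hcaro : ∑ u ∈ U, p u / w u ≤ α := by
    obtain ⟨S, -, hS, hsum⟩ :=
      exists_pairwise_sum_div_inWeight_le (R := fun i j => R i j ∨ R j i) hR'
        (fun _ _ => Or.symm) U hp
    exact hsum.trans (Nat.cast_le.2 (hα S (hS.mono' fun _ _ => mt Or.inl)))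
  have hcs : q ^ 2 ≤ (∑ u ∈ U, p u / w u) * ∑ u ∈ U, p u * w u :=
    sum_sq_le_sum_mul_sum_of_sq_le_mul U (fun u hu => div_nonneg (hp0 u hu) (hw u hu).le)
      (fun u hu => mul_nonneg (hp0 u hu) (hw u hu).le)
      fun u hu => by field_simp [(hw u hu).ne']; rfl
  have hsymm : ∑ u ∈ U, p u * w u ≤ 2 * ∑ u ∈ U, p u * inWeight R p U u :=
    calc ∑ u ∈ U, p u * w u
        ≤ ∑ u ∈ U, p u * (inWeight R p U u + inWeight (fun i j => R j i) p U u) :=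
          sum_le_sum fun u hu => mul_le_mul_of_nonneg_left (inWeight_or_le hp0 u) (hp0 u hu)
      _ = 2 * ∑ u ∈ U, p u * inWeight R p U u := by
          simp only [mul_add, sum_add_distrib]
          rw [sum_mul_inWeight_flip (R := R)]
          ring
  obtain ⟨u, hu, hmax⟩ := U.exists_max_image (inWeight R p U) hU
  have hmax' : ∑ v ∈ U, p v * inWeight R p U v ≤ q * inWeight R p U u := by
    rw [sum_mul]
    exact sum_le_sum fun v hv => mul_le_mul_of_nonneg_left (hmax v hv) (hp0 v hv)
  have hpw : 0 ≤ ∑ u ∈ U, p u * w u := sum_nonneg fun u hu => mul_nonneg (hp0 u hu) (hw u hu).le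
  refine ⟨u, hu, le_of_mul_le_mul_left ?_ (sum_pos hp hU)⟩
  calc q * q = q ^ 2 := sq q |>.symm
    _ ≤ α * (2 * (q * inWeight R p U u)) := by
      refine hcs.trans ((mul_le_mul_of_nonneg_right hcaro hpw).trans ?_)
      gcongr
      linarith
    _ = q * (2 * α * inWeight R p U u) := by ring

variable [Fintype V] [DecidableEq V] (hR : ∀ u, R u u) {α : ℕ}
  (hα : ∀ S : Finset V, (S : Set V).Pairwise (fun i j => ¬R i j) → #S ≤ α)
  (hp : ∀ u, 0 ≤ p u) {β c : ℝ} (hβ : 0 < β) (hc : 0 < c)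
  (hβR : ∀ u, β ≤ inWeight R p univ u)
include hR hα hp hβ hc hβR

theorem sum_div_inWeight_le_log (U : Finset V) (hpU : ∀ u ∈ U, 0 < p u)
    (hcU : c < ∑ u ∈ U, p u) :
    ∑ u ∈ U, p u / inWeight R p univ u ≤ 2 * α * log ((∑ u ∈ U, p u) / c) + 1 + c / β := by
  induction U using Finset.strongInduction with
  | H U ih =>
  set W := inWeight R p univ
  set q := ∑ v ∈ U, p v
  obtain ⟨u, hu, hqu⟩ := exists_sum_le_two_mul_inWeight hR hα
    (nonempty_of_sum_ne_zero (hc.trans hcU).ne') hpU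
  set q' := ∑ v ∈ U.erase u, p v
  have hqq' : q' + p u = q := sum_erase_add U p hu
  have hWu : 0 < W u := hβ.trans_le (hβR u)
  have hlog : 0 ≤ log (q / c) := log_nonneg ((one_le_div hc).2 hcU.le)
  rw [← add_sum_erase U _ hu]
  by_cases hc' : q' ≤ c
  · have hterm : p u / W u ≤ 1 :=
      div_le_one_of_le₀ (le_inWeight (fun v _ => hp v) (mem_univ u) (hR u)) hWu.le
    have hrest : ∑ v ∈ U.erase u, p v / W v ≤ c / β :=
      (sum_div_le_sum_div_of_forall_le hβ (fun v _ => hp v) fun v _ => hβR v).trans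
        (div_le_div_of_nonneg_right hc' hβ.le)
    have : 0 ≤ 2 * α * log (q / c) := by positivity
    linarith
  replace hc' := not_le.1 hc'
  have hrest := ih (U.erase u) (erase_ssubset hu) (fun v hv => hpU v (mem_of_mem_erase hv)) hc'
  have hq' : 0 < q' := hc.trans hc'
  have hq : 0 < q := hc.trans hcU
  have hqW : q ≤ 2 * α * W u := hqu.trans <| mul_le_mul_of_nonneg_left
    (inWeight_mono (fun v _ => hp v) (subset_univ U) u) (by positivity)
  have hterm : p u / W u ≤ 2 * α * (log (q / c) - log (q' / c)) :=
    calc p u / W u ≤ 2 * α * (p u / q) := by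
          rw [mul_div_assoc', div_le_div_iff₀ hWu hq]
          nlinarith [hp u]
      _ = 2 * α * (1 - (q / q')⁻¹) := by
          congr 1
          field_simp
          linarith
      _ ≤ 2 * α * log (q / q') := by gcongr; exact one_sub_inv_le_log_of_pos (by positivity)
      _ = 2 * α * (log (q / c) - log (q' / c)) := by
          rw [log_div hq.ne' hq'.ne', log_div hq.ne' hc.ne', log_div hq'.ne' hc.ne']
          ring
  linarith

theorem sum_div_inWeight_univ_le_log (hp1 : ∑ u, p u = 1) (hc1 : c < 1) :
    ∑ u, p u / inWeight R p univ u ≤ 2 * α * log (1 / c) + 1 + c / β := by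
  have hsupp : ∀ f : V → ℝ, (∀ u, f u ≠ 0 → p u ≠ 0) → ∑ u with 0 < p u, f u = ∑ u, f u :=
    fun f hf => sum_filter_of_ne fun u _ h => (hp u).lt_of_ne' (hf u h)
  have hmass : ∑ u with 0 < p u, p u = 1 := (hsupp p fun _ => id).trans hp1
  have := sum_div_inWeight_le_log hR hα hp hβ hc hβR _ (fun u hu => (mem_filter.1 hu).2)
    (hmass ▸ hc1)
  rwa [hmass, hsupp _ fun u h => (div_ne_zero_iff.1 h).1] at this

end InWeight

lemma one_div_le_one_add_ceil_div {a k c : ℝ} (hc : 0 < c) (ha : 1 ≤ a) (hak : a ≤ k) :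
    1 / c ≤ 1 + (⌈k ^ 2 / c⌉₊ + k) / a := by
  have hsq : 1 / c ≤ k ^ 2 / c / a := by
    rw [div_div, div_le_div_iff₀ hc (by positivity)]
    nlinarith [mul_le_mul_of_nonneg_left (hak.trans (by nlinarith : k ≤ k ^ 2)) hc.le]
  have hceil : k ^ 2 / c / a ≤ (⌈k ^ 2 / c⌉₊ + k) / a :=
    div_le_div_of_nonneg_right (by linarith [Nat.le_ceil (k ^ 2 / c)]) (by linarith)
  linarith

theorem dominating_set_ratio_bound_general
    (K : ℕ) (Edge : Fin K → Fin K → Bool)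
    (hself : ∀ i, Edge i i = true)
    (D : Finset (Fin K)) (hdom : ∀ i, ∃ j ∈ D, Edge j i = true)
    (p : Fin K → ℝ) (hp0 : ∀ i, 0 ≤ p i) (hp1 : ∑ i, p i = 1)
    (β : ℝ) (hβ : 0 < β) (hpD : ∀ i ∈ D, β ≤ p i)
    (α : ℕ)
    (hα : IsGreatest {m : ℕ | ∃ S : Finset (Fin K),
      (∀ i ∈ S, ∀ j ∈ S, i ≠ j → Edge i j = false ∧ Edge j i = false) ∧ S.card = m} α) :
    ∑ i, p i / (∑ j ∈ Finset.univ.filter (fun j => Edge j i = true), p j)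
      ≤ 2 * (α : ℝ) * Real.log (1 + ((⌈(K : ℝ) ^ 2 / (β * (D.card : ℝ))⌉₊ : ℝ) + (K : ℝ)) / (α : ℝ))
        + 2 * (D.card : ℝ) := by
  have hindep (S : Finset (Fin K)) (hS : (S : Set (Fin K)).Pairwise fun i j => ¬Edge i j = true) :
      #S ≤ α :=
    hα.2 ⟨S, fun i hi j hj hij => ⟨by simpa using hS hi hj hij, by simpa using hS hj hi hij.symm⟩,
      rfl⟩
  obtain ⟨i₀, -, -⟩ := exists_ne_zero_of_sum_ne_zero (hp1.trans_ne one_ne_zero)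
  have hα1 : (1 : ℝ) ≤ α := by exact_mod_cast hindep {i₀} (by simp)
  have hαK : (α : ℝ) ≤ K := by
    obtain ⟨S, -, rfl⟩ := hα.1
    exact_mod_cast (card_le_univ S).trans_eq (Fintype.card_fin K)
  have hD : (1 : ℝ) ≤ #D := by exact_mod_cast card_pos.2 ⟨_, (hdom i₀).choose_spec.1⟩
  have hβW (i : Fin K) : β ≤ inWeight (fun j i => Edge j i = true) p univ i :=
    have ⟨j, hj, hji⟩ := hdom i
    (hpD j hj).trans (le_inWeight (fun v _ => hp0 v) (mem_univ j) hji)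
  have hlog : 0 ≤ log (1 + ((⌈(K : ℝ) ^ 2 / (β * #D)⌉₊ : ℝ) + K) / α) :=
    log_nonneg (by linarith [show 0 ≤ ((⌈(K : ℝ) ^ 2 / (β * #D)⌉₊ : ℝ) + K) / α by positivity])
  change ∑ i, p i / inWeight (fun j i => Edge j i = true) p univ i ≤ _
  rcases lt_or_ge (β * #D) 1 with hc1 | hc1
  · have hsum := sum_div_inWeight_univ_le_log hself hindep hp0 hβ (by positivity) hβW hp1 hc1
    rw [mul_div_cancel_left₀ _ hβ.ne'] at hsum
    have := log_le_log (by positivity)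
      (one_div_le_one_add_ceil_div (c := β * #D) (by positivity) hα1 hαK)
    nlinarith
  · calc _ ≤ (∑ i, p i) / β :=
          sum_div_le_sum_div_of_forall_le hβ (fun i _ => hp0 i) fun i _ => hβW i
      _ ≤ #D := by rwa [hp1, div_le_iff₀ hβ, mul_comm]
      _ ≤ _ := by nlinarith

/-- Let `G` be a directed graph on `K` vertices with all self-loops, `D` a dominating set
(every vertex has an in-edge from `D`), and `p` a probability distribution with
`p i ≥ β > 0` for every `i ∈ D`.  Then
`∑ i, p i / (∑_{j : j → i} p j)
  ≤ 2*α(G) * ln (1 + (⌈K²/(β*|D|)⌉ + K)/α(G)) + 2*|D|`,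
where `α(G)` is the independence number of `G` (no edge in either direction between two
distinct vertices of an independent set). -/
theorem dominating_set_ratio_bound
    (K : ℕ) (hK : 1 ≤ K) (Edge : Fin K → Fin K → Bool)
    (hself : ∀ i, Edge i i = true)
    (D : Finset (Fin K)) (hdom : ∀ i, ∃ j ∈ D, Edge j i = true)
    (p : Fin K → ℝ) (hp0 : ∀ i, 0 ≤ p i) (hp1 : ∑ i, p i = 1)
    (β : ℝ) (hβ : 0 < β) (hpD : ∀ i ∈ D, β ≤ p i)
    (α : ℕ)
    (hα : IsGreatest {m : ℕ | ∃ S : Finset (Fin K),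
      (∀ i ∈ S, ∀ j ∈ S, i ≠ j → Edge i j = false ∧ Edge j i = false) ∧ S.card = m} α) :
    ∑ i, p i / (∑ j ∈ Finset.univ.filter (fun j => Edge j i = true), p j)
      ≤ 2 * (α : ℝ) * Real.log (1 + ((⌈(K : ℝ) ^ 2 / (β * (D.card : ℝ))⌉₊ : ℝ) + (K : ℝ)) / (α : ℝ))
        + 2 * (D.card : ℝ) :=
  dominating_set_ratio_bound_general K Edge hself D hdom p hp0 hp1 β hβ hpD α hα
end

section
/- (Deterministic exponential-weights inequality.) Let K >= 2, eta in (0,1), T >= 1, and for t = 1,...,T and i = 1,...,K let hat_ell_t(i) >= 0 be arbitrary nonnegative numbers and let bar_F_{i,t} >= 0 satisfy sum_{i=1}^K bar_F_{i,t} = 1 for each t. Define weights w_{i,1} = 1 and w_{i,t+1} = w_{i,t} * exp(-eta * hat_ell_t(i)), W_t = sum_{i=1}^K w_{i,t}, and pi_{i,t} = (1-eta) * w_{i,t}/W_t + eta * bar_F_{i,t}. Then for every index i: sum_{t=1}^T sum_{j=1}^K pi_{j,t} * hat_ell_t(j) - sum_{t=1}^T hat_ell_t(i) <= (ln K)/eta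 + eta * sum_{t=1}^T sum_{j=1}^K bar_F_{j,t} * hat_ell_t(j) + (eta/2) * sum_{t=1}^T sum_{j=1}^K ( pi_{j,t} - eta * bar_F_{j,t} ) * hat_ell_t(j)^2. -/
open Real Finset

/-!
Exponential weights are the Hedge algorithm with learning rate `η`. Its potential
`log ∑ⱼ w j t` starts at `log K`, never drops below `log (w i (T + 1)) = -η ∑ₜ ℓ̂ t i`, and by
`exp (-x) ≤ 1 - x + x² / 2` and `1 + y ≤ exp y` decreases at step `t` by at least
`η p_t⬝ℓ̂_t - η² / 2 · p_t⬝ℓ̂_t²`, where `p_t = w t / W t`. This gives the Hedge regret bound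
`∑ₜ p_t⬝ℓ̂_t ≤ ∑ₜ ℓ̂ t i + log K / η + η / 2 · ∑ₜ p_t⬝ℓ̂_t²`. The mixture
`π t = (1 - η) p_t + η F̄ t` pays `(1 - η)` times the Hedge loss plus the exploration term, which
appears on both sides, and since `1 - η ≤ 1` the bound transfers.
-/

theorem Real.exp_neg_le_one_sub_add_sq_div_two {x : ℝ} (hx : 0 ≤ x) :
    exp (-x) ≤ 1 - x + x ^ 2 / 2 := by
  rw [exp_neg, inv_le_iff_one_le_mul₀ (exp_pos x)]
  -- `(1 + x + x² / 2) (1 - x + x² / 2) = 1 + x⁴ / 4`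
  have hq : 0 ≤ 1 - x + x ^ 2 / 2 := by nlinarith [sq_nonneg (x - 1)]
  nlinarith [mul_le_mul_of_nonneg_right (quadratic_le_exp_of_nonneg hx) hq, pow_two_nonneg (x ^ 2)]

section WeightedSums

variable {ι : Type*} [Fintype ι]

theorem sum_mul_div_sum_mul_eq_mul_centerMass (c : ℝ) (v f : ι → ℝ) :
    ∑ j, c * v j / (∑ k, v k) * f j = c * univ.centerMass v f := by
  simp only [centerMass, smul_eq_mul, mul_sum]
  exact sum_congr rfl fun j _ => by ring

theorem sum_mul_exp_neg_le {v x : ι → ℝ} (hv : ∀ j, 0 ≤ v j) (hx : ∀ j, 0 ≤ x j) {η : ℝ}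
    (hη : 0 ≤ η) :
    ∑ j, v j * exp (-η * x j)
      ≤ ∑ j, v j - η * ∑ j, v j * x j + η ^ 2 / 2 * ∑ j, v j * x j ^ 2 := by
  calc ∑ j, v j * exp (-η * x j) ≤ ∑ j, v j * (1 - η * x j + (η * x j) ^ 2 / 2) := by
        gcongr with j
        · exact hv j
        · rw [neg_mul]
          exact exp_neg_le_one_sub_add_sq_div_two (mul_nonneg hη (hx j))
    _ = ∑ j, v j - η * ∑ j, v j * x j + η ^ 2 / 2 * ∑ j, v j * x j ^ 2 := by
        simp only [mul_sum, ← sum_sub_distrib, ← sum_add_distrib]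
        exact sum_congr rfl fun j _ => by ring

theorem log_sum_mul_exp_neg_le [Nonempty ι] {v x : ι → ℝ} (hv : ∀ j, 0 < v j)
    (hx : ∀ j, 0 ≤ x j) {η : ℝ} (hη : 0 ≤ η) :
    log (∑ j, v j * exp (-η * x j))
      ≤ log (∑ j, v j) - η * univ.centerMass v x
        + η ^ 2 / 2 * univ.centerMass v (fun j => x j ^ 2) := by
  have hV : 0 < ∑ j, v j := sum_pos (fun j _ => hv j) univ_nonempty
  have hmean (f : ι → ℝ) : ∑ j, v j * f j = (∑ j, v j) * univ.centerMass v f := by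
    rw [centerMass, smul_eq_mul, mul_inv_cancel_left₀ hV.ne']
    simp only [smul_eq_mul]
  set y := -η * univ.centerMass v x + η ^ 2 / 2 * univ.centerMass v (fun j => x j ^ 2)
  have hsum : ∑ j, v j * exp (-η * x j) ≤ (∑ j, v j) * exp y := by
    calc ∑ j, v j * exp (-η * x j)
        ≤ ∑ j, v j - η * ∑ j, v j * x j + η ^ 2 / 2 * ∑ j, v j * x j ^ 2 :=
          sum_mul_exp_neg_le (fun j => (hv j).le) hx hη
      _ = (∑ j, v j) * (y + 1) := by rw [hmean x, hmean (fun j => x j ^ 2)]; ring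
      _ ≤ (∑ j, v j) * exp y := by gcongr; exact add_one_le_exp y
  have hpos : 0 < ∑ j, v j * exp (-η * x j) :=
    sum_pos (fun j _ => mul_pos (hv j) (exp_pos _)) univ_nonempty
  calc log (∑ j, v j * exp (-η * x j)) ≤ log ((∑ j, v j) * exp y) := log_le_log hpos hsum
    _ = log (∑ j, v j) + y := by rw [log_mul hV.ne' (exp_pos y).ne', log_exp]
    _ = _ := by ring

end WeightedSums

structure IsExpWeights {ι : Type*} (η : ℝ) (ℓ : ℕ → ι → ℝ) (w : ι → ℕ → ℝ) : Prop where
  one : ∀ i, w i 1 = 1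
  succ : ∀ i t, 1 ≤ t → w i (t + 1) = w i t * exp (-η * ℓ t i)

namespace IsExpWeights

variable {ι : Type*} {η : ℝ} {ℓ : ℕ → ι → ℝ} {w : ι → ℕ → ℝ}

theorem eq_exp (hw : IsExpWeights η ℓ w) (i : ι) (n : ℕ) :
    w i (n + 1) = exp (-η * ∑ t ∈ Icc 1 n, ℓ t i) := by
  induction n with
  | zero => simp [hw.one]
  | succ n ih =>
    rw [hw.succ i (n + 1) n.succ_pos, ih, sum_Icc_succ_top n.succ_pos, ← exp_add]
    ring_nf

theorem pos (hw : IsExpWeights η ℓ w) {t : ℕ} (ht : 1 ≤ t) (i : ι) : 0 < w i t := by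
  obtain ⟨n, rfl⟩ := Nat.exists_eq_add_of_le' ht
  rw [hw.eq_exp]
  exact exp_pos _

variable [Fintype ι]

theorem log_sum_succ_le [Nonempty ι] (hw : IsExpWeights η ℓ w) (hη : 0 ≤ η) {t : ℕ}
    (ht : 1 ≤ t) (hℓ : ∀ j, 0 ≤ ℓ t j) :
    log (∑ j, w j (t + 1))
      ≤ log (∑ j, w j t) - η * univ.centerMass (w · t) (ℓ t)
        + η ^ 2 / 2 * univ.centerMass (w · t) (fun j => ℓ t j ^ 2) := by
  simp only [hw.succ _ t ht]
  exact log_sum_mul_exp_neg_le (hw.pos ht) hℓ hη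

theorem log_sum_le [Nonempty ι] (hw : IsExpWeights η ℓ w) (hη : 0 ≤ η)
    (hℓ : ∀ t j, 0 ≤ ℓ t j) (T : ℕ) :
    log (∑ j, w j (T + 1))
      ≤ log (Fintype.card ι) + ∑ t ∈ Icc 1 T, (-η * univ.centerMass (w · t) (ℓ t)
        + η ^ 2 / 2 * univ.centerMass (w · t) (fun j => ℓ t j ^ 2)) := by
  induction T with
  | zero => simp [hw.one]
  | succ T ih =>
    rw [sum_Icc_succ_top T.succ_pos]
    linarith [hw.log_sum_succ_le hη T.succ_pos (hℓ (T + 1))]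

theorem sum_centerMass_le (hw : IsExpWeights η ℓ w) (hη : 0 < η) (hℓ : ∀ t j, 0 ≤ ℓ t j)
    (i : ι) (T : ℕ) :
    ∑ t ∈ Icc 1 T, univ.centerMass (w · t) (ℓ t)
      ≤ ∑ t ∈ Icc 1 T, ℓ t i + log (Fintype.card ι) / η
        + η / 2 * ∑ t ∈ Icc 1 T, univ.centerMass (w · t) (fun j => ℓ t j ^ 2) := by
  have : Nonempty ι := ⟨i⟩
  have hlow : -η * ∑ t ∈ Icc 1 T, ℓ t i ≤ log (∑ j, w j (T + 1)) := by
    rw [← log_exp (-η * _), ← hw.eq_exp]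
    exact log_le_log (hw.pos T.succ_pos i)
      (single_le_sum (fun j _ => (hw.pos T.succ_pos j).le) (mem_univ i))
  have hup := hw.log_sum_le hη.le hℓ T
  rw [sum_add_distrib, ← mul_sum, ← mul_sum] at hup
  rw [← mul_le_mul_iff_right₀ hη, mul_add, mul_add, mul_div_cancel₀ _ hη.ne']
  linarith

end IsExpWeights

theorem exponential_weights_inequality_general
    (K : ℕ) (η : ℝ) (hη0 : 0 < η) (hη1 : η < 1) (T : ℕ)
    (ℓhat : ℕ → Fin K → ℝ) (hℓ : ∀ t i, 0 ≤ ℓhat t i)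
    (Fbar : Fin K → ℕ → ℝ)
    (w : Fin K → ℕ → ℝ) (hw1 : ∀ i, w i 1 = 1)
    (hwrec : ∀ i t, 1 ≤ t → w i (t + 1) = w i t * Real.exp (-η * ℓhat t i))
    (W : ℕ → ℝ) (hW : ∀ t, W t = ∑ i, w i t)
    (pi : Fin K → ℕ → ℝ) (hpi : ∀ i t, pi i t = (1 - η) * w i t / W t + η * Fbar i t) :
    ∀ i : Fin K,
      ∑ t ∈ Finset.Icc 1 T, ∑ j, pi j t * ℓhat t j - ∑ t ∈ Finset.Icc 1 T, ℓhat t i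
        ≤ Real.log K / η
          + η * ∑ t ∈ Finset.Icc 1 T, ∑ j, Fbar j t * ℓhat t j
          + (η / 2) * ∑ t ∈ Finset.Icc 1 T, ∑ j, (pi j t - η * Fbar j t) * ℓhat t j ^ 2 := by
  intro i
  have hregret := IsExpWeights.sum_centerMass_le ⟨hw1, hwrec⟩ hη0 hℓ i T
  rw [Fintype.card_fin] at hregret
  have hmean (t : ℕ) (f : Fin K → ℝ) :
      ∑ j, (1 - η) * w j t / W t * f j = (1 - η) * univ.centerMass (w · t) f := by
    rw [hW]
    exact sum_mul_div_sum_mul_eq_mul_centerMass _ _ _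
  simp only [hpi, add_mul, sum_add_distrib, add_sub_cancel_right, hmean, mul_assoc, ← mul_sum]
  have hlogK : 0 ≤ log K / η := div_nonneg (log_natCast_nonneg K) hη0.le
  have hloss : 0 ≤ ∑ t ∈ Icc 1 T, ℓhat t i := sum_nonneg fun t _ => hℓ t i
  linarith [mul_le_mul_of_nonneg_left hregret (sub_nonneg.2 hη1.le), mul_nonneg hη0.le hloss,
    mul_nonneg hη0.le hlogK]

/-- Deterministic exponential-weights inequality.  Let `K ≥ 2`, `η ∈ (0,1)`, `T ≥ 1`,
nonnegative loss estimates `ℓ̂ t i` and exploration coefficients `F̄ i t ≥ 0` with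
`∑ i, F̄ i t = 1`.  Define `w i 1 = 1`, `w i (t+1) = w i t * exp (-η * ℓ̂ t i)`,
`W t = ∑ i, w i t`, `π i t = (1-η) * w i t / W t + η * F̄ i t`.  Then for every `i`:
`∑ t ∑ j π j t * ℓ̂ t j - ∑ t ℓ̂ t i
  ≤ ln K / η + η * ∑ t ∑ j F̄ j t * ℓ̂ t j + (η/2) * ∑ t ∑ j (π j t - η * F̄ j t) * ℓ̂ t j ^ 2`. -/
theorem exponential_weights_inequality
    (K : ℕ) (hK : 2 ≤ K) (η : ℝ) (hη0 : 0 < η) (hη1 : η < 1) (T : ℕ) (hT : 1 ≤ T)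
    (ℓhat : ℕ → Fin K → ℝ) (hℓ : ∀ t i, 0 ≤ ℓhat t i)
    (Fbar : Fin K → ℕ → ℝ) (hFbar0 : ∀ i t, 0 ≤ Fbar i t)
    (hFbar1 : ∀ t, ∑ i, Fbar i t = 1)
    (w : Fin K → ℕ → ℝ) (hw1 : ∀ i, w i 1 = 1)
    (hwrec : ∀ i t, 1 ≤ t → w i (t + 1) = w i t * Real.exp (-η * ℓhat t i))
    (W : ℕ → ℝ) (hW : ∀ t, W t = ∑ i, w i t)
    (pi : Fin K → ℕ → ℝ) (hpi : ∀ i t, pi i t = (1 - η) * w i t / W t + η * Fbar i t) :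
    ∀ i : Fin K,
      ∑ t ∈ Finset.Icc 1 T, ∑ j, pi j t * ℓhat t j - ∑ t ∈ Finset.Icc 1 T, ℓhat t i
        ≤ Real.log K / η
          + η * ∑ t ∈ Finset.Icc 1 T, ∑ j, Fbar j t * ℓhat t j
          + (η / 2) * ∑ t ∈ Finset.Icc 1 T, ∑ j, (pi j t - η * Fbar j t) * ℓhat t j ^ 2 :=
  exponential_weights_inequality_general K η hη0 hη1 T ℓhat hℓ Fbar w hw1 hwrec W hW pi hpi
end
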